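/- E[min{X, δ + Y + Z}] = (1/4)(8 + 4δ − e^{δ}(5 − 2δ)) if δ < 0, and (1/4)(4 − e^{−δ}) if δ ≥ 0, where X, Y, Z are independent Exp(1) random variables. -/

import Mathlib

/-!
For `X ~ Exp(1)` one has `E[min(X, t)] = t` for `t ≤ 0` and `1 - e^{-t}` for `t ≥ 0`. Averaging
this at `t = s + Z` over `Z ~ Exp(1)` gives another explicit piecewise function of `s`, and
averaging that at `s = δ + Y` gives the result. Independence lets each average be taken with the
remaining variables frozen (Fubini on their joint law, which is a product measure).
-/

open Real MeasureTheory ProbabilityTheory Set Filter Topology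

lemma integral_Ioi_eq_intervalIntegral_add_of_eqOn {f g h : ℝ → ℝ} {a b : ℝ} (hab : a ≤ b)
    (hfg : EqOn f g (Icc a b)) (hfh : EqOn f h (Ioi b))
    (hg : IntervalIntegrable g volume a b) (hh : IntegrableOn h (Ioi b)) :
    ∫ x in Ioi a, f x = (∫ x in a..b, g x) + ∫ x in Ioi b, h x := by
  have hf : IntervalIntegrable f volume a b :=
    hg.congr_ae <| ae_restrict_of_forall_mem measurableSet_uIoc fun x hx =>
      (hfg (Ioc_subset_Icc_self (by rwa [uIoc_of_le hab] at hx))).symm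
  rw [← intervalIntegral.integral_interval_add_Ioi' hf (hh.congr_fun hfh.symm measurableSet_Ioi),
    intervalIntegral.integral_congr (by rwa [uIcc_of_le hab]),
    setIntegral_congr_fun measurableSet_Ioi hfh]

lemma integral_exp_neg_mul_add (a b c : ℝ) :
    ∫ x in a..b, exp (-x) * (c + x) = (c + a + 1) * exp (-a) - (c + b + 1) * exp (-b) := by
  have hderiv (x : ℝ) :
      HasDerivAt (fun x => -((c + x + 1) * exp (-x))) (exp (-x) * (c + x)) x := by
    refine ((((hasDerivAt_id' x).const_add c).add_const 1).fun_mul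
      (hasDerivAt_neg x).exp).fun_neg.congr_deriv ?_
    ring
  rw [intervalIntegral.integral_eq_sub_of_hasDerivAt (fun x _ => hderiv x)
    (by apply Continuous.intervalIntegrable; fun_prop)]
  ring

lemma integrableOn_exp_neg_mul_one_sub (a c : ℝ) :
    IntegrableOn (fun x => exp (-x) * (1 - c * exp (-x))) (Ioi a) := by
  refine ((exp_neg_integrableOn_Ioi a zero_lt_one).sub
    ((exp_neg_integrableOn_Ioi a zero_lt_two).const_mul c)).congr_fun (fun x _ => ?_)
    measurableSet_Ioi
  simp only [Pi.sub_apply, show -2 * x = -x + -x by ring, exp_add]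
  ring_nf

lemma integral_Ioi_exp_neg_mul_one_sub (a c : ℝ) :
    ∫ x in Ioi a, exp (-x) * (1 - c * exp (-x)) = exp (-a) * (1 - c * exp (-a) / 2) := by
  have hderiv (x : ℝ) : HasDerivAt (fun x => -(exp (-x) * (1 - c * exp (-x) / 2)))
      (exp (-x) * (1 - c * exp (-x))) x := by
    refine ((hasDerivAt_neg x).exp.fun_mul (HasDerivAt.const_sub 1
      (((hasDerivAt_neg x).exp.const_mul c).div_const 2))).fun_neg.congr_deriv ?_
    ring
  have hlim : Tendsto (fun x => -(exp (-x) * (1 - c * exp (-x) / 2))) atTop (𝓝 0) := by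
    have h := tendsto_exp_neg_atTop_nhds_zero
    simpa using (h.mul (Tendsto.const_sub 1 ((h.const_mul c).div_const 2))).neg
  rw [integral_Ioi_of_hasDerivAt_of_tendsto' (fun x _ => hderiv x)
    (integrableOn_exp_neg_mul_one_sub a c) hlim]
  ring

instance : IsProbabilityMeasure (expMeasure 1) := isProbabilityMeasure_expMeasure one_pos

lemma expMeasure_one_eq_withDensity :
    expMeasure 1 = (volume.restrict (Ioi 0)).withDensity fun x => ENNReal.ofReal (exp (-x)) := by
  have hpdf : exponentialPDF 1 = (Ici 0).indicator fun x => ENNReal.ofReal (exp (-x)) := by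
    ext x
    by_cases hx : 0 ≤ x <;> simp [exponentialPDF_eq, hx]
  rw [Measure.restrict_congr_set Ioi_ae_eq_Ici, ← withDensity_indicator measurableSet_Ici, ← hpdf]
  rfl

lemma integral_expMeasure_one (g : ℝ → ℝ) :
    ∫ x, g x ∂expMeasure 1 = ∫ x in Ioi 0, exp (-x) * g x := by
  rw [expMeasure_one_eq_withDensity, integral_withDensity_eq_integral_toReal_smul (by fun_prop)
    (ae_of_all _ fun _ => ENNReal.ofReal_lt_top)]
  simp [ENNReal.toReal_ofReal (exp_nonneg _)]

lemma integrable_expMeasure_one_iff {g : ℝ → ℝ} :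
    Integrable g (expMeasure 1) ↔ IntegrableOn (fun x => exp (-x) * g x) (Ioi 0) := by
  rw [expMeasure_one_eq_withDensity, integrable_withDensity_iff_integrable_smul' (by fun_prop)
    (ae_of_all _ fun _ => ENNReal.ofReal_lt_top)]
  simp [ENNReal.toReal_ofReal (exp_nonneg _), IntegrableOn]

lemma integrable_id_expMeasure_one : Integrable (fun x => x) (expMeasure 1) := by
  rw [integrable_expMeasure_one_iff]
  simpa [show (2 : ℝ) - 1 = 1 by norm_num] using GammaIntegral_convergent (s := 2) (by norm_num)

namespace ProbabilityTheory

lemma HasLaw.of_map_eq {Ω 𝓧 : Type*} [MeasurableSpace Ω] [MeasurableSpace 𝓧] {X : Ω → 𝓧}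
    {P : Measure Ω} {μ : Measure 𝓧} [NeZero μ] (h : P.map X = μ) : HasLaw X μ P :=
  ⟨.of_map_ne_zero (h ▸ NeZero.ne μ), h⟩

lemma IndepFun.integral_comp_prodMk {Ω 𝓧 𝓨 E : Type*} [MeasurableSpace Ω] [MeasurableSpace 𝓧]
    [MeasurableSpace 𝓨] [NormedAddCommGroup E] [NormedSpace ℝ E] {P : Measure Ω}
    [IsFiniteMeasure P] {μ : Measure 𝓧} {ν : Measure 𝓨} {X : Ω → 𝓧} {V : Ω → 𝓨}
    (hX : HasLaw X μ P) (hV : HasLaw V ν P) (hXV : IndepFun X V P) {F : 𝓧 × 𝓨 → E}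
    (hF : Integrable F (μ.prod ν)) :
    ∫ ω, F (X ω, V ω) ∂P = ∫ ω, ∫ x, F (x, V ω) ∂μ ∂P := by
  have := hX.isFiniteMeasure_iff.1 ‹_›
  have := hV.isFiniteMeasure_iff.1 ‹_›
  rw [← Function.comp_def F, (hXV.hasLaw_prod hX hV).integral_comp hF.aestronglyMeasurable,
    integral_prod_symm F hF]
  exact (hV.integral_comp (f := fun v => ∫ x, F (x, v) ∂μ)
    hF.integral_prod_right.aestronglyMeasurable).symm

end ProbabilityTheory

noncomputable def expMinMean (t : ℝ) : ℝ := if t ≤ 0 then t else 1 - exp (-t)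

noncomputable def expMinMean₂ (s : ℝ) : ℝ :=
  if s ≤ 0 then s + 1 - exp s / 2 else 1 - exp (-s) / 2

lemma expMinMean_of_nonneg {t : ℝ} (ht : 0 ≤ t) : expMinMean t = 1 - exp (-t) := by
  rcases ht.eq_or_lt with rfl | ht
  · simp [expMinMean]
  · exact if_neg ht.not_ge

lemma expMinMean₂_of_nonneg {s : ℝ} (hs : 0 ≤ s) : expMinMean₂ s = 1 - exp (-s) / 2 := by
  rcases hs.eq_or_lt with rfl | hs
  · norm_num [expMinMean₂]
  · exact if_neg hs.not_ge

lemma measurable_expMinMean₂ : Measurable expMinMean₂ :=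
  Measurable.ite measurableSet_Iic (by fun_prop) (by fun_prop)

lemma integral_min_expMeasure_one (t : ℝ) : ∫ x, min x t ∂expMeasure 1 = expMinMean t := by
  rw [integral_expMeasure_one]
  rcases le_or_gt t 0 with ht | ht
  · rw [expMinMean, if_pos ht, setIntegral_congr_fun measurableSet_Ioi (g := fun x => exp (-x) * t)
      fun x hx => by rw [min_eq_right (ht.trans hx.out.le)], integral_mul_const,
      integral_exp_neg_Ioi_zero, one_mul]
  · rw [expMinMean, if_neg ht.not_ge, integral_Ioi_eq_intervalIntegral_add_of_eqOn ht.le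
      (g := fun x => exp (-x) * (0 + x)) (h := fun x => exp (-x) * t)
      (fun x hx => by simp only [min_eq_left hx.2, zero_add])
      (fun x hx => by rw [min_eq_right hx.out.le])
      (by apply Continuous.intervalIntegrable; fun_prop) ((integrableOn_exp_neg_Ioi t).mul_const t),
      integral_exp_neg_mul_add, integral_mul_const, integral_exp_neg_Ioi]
    simp only [neg_zero, exp_zero]
    ring

lemma integral_expMinMean_add_expMeasure_one (s : ℝ) :
    ∫ z, expMinMean (s + z) ∂expMeasure 1 = expMinMean₂ s := by
  rw [integral_expMeasure_one]
  have htail {z : ℝ} (hz : 0 ≤ s + z) :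
      exp (-z) * expMinMean (s + z) = exp (-z) * (1 - exp (-s) * exp (-z)) := by
    rw [expMinMean_of_nonneg hz, neg_add, exp_add]
  rcases le_or_gt 0 s with hs | hs
  · rw [expMinMean₂_of_nonneg hs, setIntegral_congr_fun measurableSet_Ioi
      fun z hz => htail (by linarith [hz.out]), integral_Ioi_exp_neg_mul_one_sub]
    simp only [neg_zero, exp_zero]
    ring
  · rw [expMinMean₂, if_pos hs.le, integral_Ioi_eq_intervalIntegral_add_of_eqOn (b := -s)
      (by linarith) (g := fun z => exp (-z) * (s + z))
      (fun z hz => by rw [expMinMean, if_pos (by linarith [hz.2])])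
      (fun z hz => htail (by linarith [hz.out]))
      (by apply Continuous.intervalIntegrable; fun_prop) (integrableOn_exp_neg_mul_one_sub _ _),
      integral_exp_neg_mul_add, integral_Ioi_exp_neg_mul_one_sub]
    have : exp (-s) * exp s = 1 := by rw [← exp_add, neg_add_cancel, exp_zero]
    simp only [neg_zero, exp_zero, neg_neg]
    linear_combination (-exp s / 2) * this

lemma integral_expMinMean₂_add_expMeasure_one (δ : ℝ) :
    ∫ y, expMinMean₂ (δ + y) ∂expMeasure 1 =
      if δ < 0 then (1 / 4) * (8 + 4 * δ - exp δ * (5 - 2 * δ))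
      else (1 / 4) * (4 - exp (-δ)) := by
  rw [integral_expMeasure_one]
  have htail {y : ℝ} (hy : 0 ≤ δ + y) :
      exp (-y) * expMinMean₂ (δ + y) = exp (-y) * (1 - exp (-δ) / 2 * exp (-y)) := by
    rw [expMinMean₂_of_nonneg hy, neg_add, exp_add]
    ring
  split_ifs with hδ
  · have hhead {y : ℝ} (hy : δ + y ≤ 0) :
        exp (-y) * expMinMean₂ (δ + y) = exp (-y) * ((δ + 1) + y) - exp δ / 2 := by
      rw [expMinMean₂, if_pos hy, exp_add]
      have : exp (-y) * exp y = 1 := by rw [← exp_add, neg_add_cancel, exp_zero]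
      linear_combination (-exp δ / 2) * this
    rw [integral_Ioi_eq_intervalIntegral_add_of_eqOn (b := -δ) (by linarith)
      (fun y hy => hhead (by linarith [hy.2])) (fun y hy => htail (by linarith [hy.out]))
      (by apply Continuous.intervalIntegrable; fun_prop) (integrableOn_exp_neg_mul_one_sub _ _),
      intervalIntegral.integral_sub (by apply Continuous.intervalIntegrable; fun_prop)
        intervalIntegrable_const,
      integral_exp_neg_mul_add, intervalIntegral.integral_const, integral_Ioi_exp_neg_mul_one_sub]
    have : exp (-δ) * exp δ = 1 := by rw [← exp_add, neg_add_cancel, exp_zero]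
    simp only [neg_zero, exp_zero, neg_neg, sub_zero, smul_eq_mul]
    linear_combination (-exp δ / 4) * this
  · rw [setIntegral_congr_fun measurableSet_Ioi
      fun y hy => htail (by linarith [hy.out]), integral_Ioi_exp_neg_mul_one_sub]
    simp only [neg_zero, exp_zero]
    ring

lemma integrable_min_add_add_expMeasure_one (δ : ℝ) :
    Integrable (fun p : ℝ × ℝ × ℝ => min p.1 (δ + p.2.1 + p.2.2))
      ((expMeasure 1).prod ((expMeasure 1).prod (expMeasure 1))) := by
  have h := integrable_id_expMeasure_one
  exact (h.comp_fst _).inf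
    ((((integrable_const δ).add (h.comp_fst _)).add (h.comp_snd _)).comp_snd _)

lemma integrable_expMinMean_add_add_expMeasure_one (δ : ℝ) :
    Integrable (fun q : ℝ × ℝ => expMinMean (δ + q.2 + q.1))
      ((expMeasure 1).prod (expMeasure 1)) := by
  have h := (integrable_min_add_add_expMeasure_one δ).integral_prod_right.swap
  simp only [integral_min_expMeasure_one] at h
  exact h

theorem expectation_min {Ω : Type*} [MeasurableSpace Ω] (μ : Measure Ω)
    [IsProbabilityMeasure μ] (X Y Z : Ω → ℝ)
    (hindep : iIndepFun ![X, Y, Z] μ)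
    (hXe : Measure.map X μ = expMeasure 1)
    (hYe : Measure.map Y μ = expMeasure 1)
    (hZe : Measure.map Z μ = expMeasure 1) (δ : ℝ) :
    ∫ ω, min (X ω) (δ + Y ω + Z ω) ∂μ =
      if δ < 0 then (1 / 4) * (8 + 4 * δ - exp δ * (5 - 2 * δ))
      else (1 / 4) * (4 - exp (-δ)) := by
  have hXl := HasLaw.of_map_eq hXe
  have hYl := HasLaw.of_map_eq hYe
  have hZl := HasLaw.of_map_eq hZe
  have hmeas : ∀ i, AEMeasurable (![X, Y, Z] i) μ := by
    intro i
    fin_cases i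
    exacts [hXl.aemeasurable, hYl.aemeasurable, hZl.aemeasurable]
  have hYZ : IndepFun Y Z μ := by simpa using hindep.indepFun (i := 1) (j := 2) (by decide)
  have hX_YZ : IndepFun X (fun ω => (Y ω, Z ω)) μ := by
    simpa using (hindep.indepFun_prodMk₀ hmeas 1 2 0 (by decide) (by decide)).symm
  calc ∫ ω, min (X ω) (δ + Y ω + Z ω) ∂μ
      = ∫ ω, expMinMean (δ + Y ω + Z ω) ∂μ := by
        rw [hX_YZ.integral_comp_prodMk hXl (hYZ.hasLaw_prod hYl hZl)
          (integrable_min_add_add_expMeasure_one δ)]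
        simp only [integral_min_expMeasure_one]
    _ = ∫ ω, expMinMean₂ (δ + Y ω) ∂μ := by
        rw [hYZ.symm.integral_comp_prodMk hZl hYl (integrable_expMinMean_add_add_expMeasure_one δ)]
        simp only [integral_expMinMean_add_expMeasure_one]
    _ = ∫ y, expMinMean₂ (δ + y) ∂expMeasure 1 :=
        hYl.integral_comp (f := fun y => expMinMean₂ (δ + y))
          (measurable_expMinMean₂.comp (measurable_const_add δ)).aestronglyMeasurable
    _ = _ := integral_expMinMean₂_add_expMeasure_one δ
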